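/- If the data values prescribed at all grid points and all derivative orders are zero, the unique Hermite interpolant is the zero polynomial: the Hermite basis polynomials H_{(a,k)}, for a ∈ A and k ∈ [0, ν(a) − 1], are linearly independent over the field k. -/

import Mathlib

open MvPolynomial

variable {k : Type*} [Field k] [CharZero k] [DecidableEq k]

/-- The univariate Hermite factor `H_{aᵢ}` placed in variable `i`. -/
noncomputable def hermiteFactor {n : ℕ} (A : Fin n → Finset k) (ν : Fin n → k → ℕ)
    (i : Fin n) (ai : k) : MvPolynomial (Fin n) k :=
  ∏ c ∈ (A i).erase ai, (C ((ai - c)⁻¹) * (X i - C c)) ^ ν i c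

/-- The multivariate Hermite basis polynomial `H_{(a,k)}`. -/
noncomputable def hermiteBasis {n : ℕ} (A : Fin n → Finset k) (ν : Fin n → k → ℕ)
    (a : Fin n → k) (m : Fin n → ℕ) : MvPolynomial (Fin n) k :=
  ∏ i, (C ((m i).factorial : k)⁻¹ * (X i - C (a i)) ^ (m i) *
      hermiteFactor A ν i (a i))

/-!
Pair the Hermite basis with the Taylor functionals `f ↦ coeff_m f(x + a)`, i.e. the coefficient
of `(x - a)^m`, one for each index `(a, m)`. This pairing is triangular: the functional at `(a, m)`
kills every other `H_{(b,l)}` unless `b = a` and `l < m`, and takes the value `∏ 1/mᵢ!` on `H_{(a,m)}`.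
Indeed, if `bᵢ ≠ aᵢ` then `H_{(b,l)}` is divisible by `(xᵢ - aᵢ)^{νᵢ(aᵢ)}` with `mᵢ < νᵢ(aᵢ)`,
and if `b = a` but `mᵢ < lᵢ` it is divisible by `(xᵢ - aᵢ)^{lᵢ}`. Induction on `m` along the
well-founded order `<` on `ℕⁿ` then shows that every vanishing combination has zero coefficients.
-/

theorem LinearIndependent.of_dual_triangular {ι R M : Type*} [Ring R] [NoZeroDivisors R]
    [AddCommGroup M] [Module R M] {r : ι → ι → Prop} (hr : WellFounded r) {v : ι → M}
    (f : ι → M →ₗ[R] R) (hdiag : ∀ i, f i (v i) ≠ 0)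
    (hoff : ∀ i j, j ≠ i → ¬ r j i → f i (v j) = 0) :
    LinearIndependent R v := by
  classical
  rw [linearIndependent_iff']
  intro s g hg i
  induction i using hr.induction with
  | _ i ih =>
  intro hi
  have hfi : ∑ j ∈ s, g j * f i (v j) = 0 := by
    simpa only [map_sum, map_smul, smul_eq_mul, map_zero] using congrArg (f i) hg
  rw [Finset.sum_eq_single_of_mem i hi] at hfi
  · exact (mul_eq_zero.mp hfi).resolve_right (hdiag i)
  · intro j hj hji
    by_cases hji' : r j i
    · rw [ih j hji' hj, zero_mul]
    · rw [hoff i j hji hji', mul_zero]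

namespace Polynomial

variable {R : Type*} [CommRing R]

theorem coeff_taylor_eq_zero_of_dvd {b : R} {s t : ℕ} {f : R[X]}
    (hf : (X - C b) ^ s ∣ f) (ht : t < s) : (taylor b f).coeff t = 0 := by
  obtain ⟨g, rfl⟩ := hf
  rw [taylor_mul, taylor_pow, map_sub, taylor_X, taylor_C, add_sub_cancel_right,
    coeff_X_pow_mul', if_neg (not_le.mpr ht)]

theorem coeff_taylor_X_sub_C_pow_mul (b : R) (t : ℕ) (f : R[X]) :
    (taylor b ((X - C b) ^ t * f)).coeff t = f.eval b := by
  rw [taylor_mul, taylor_pow, map_sub, taylor_X, taylor_C, add_sub_cancel_right,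
    coeff_X_pow_mul', if_pos le_rfl, Nat.sub_self, taylor_coeff_zero]

noncomputable def hermiteBasisPoly {K : Type*} [Field K] [DecidableEq K] (S : Finset K)
    (μ : K → ℕ) (b : K) (l : ℕ) : K[X] :=
  C (l.factorial : K)⁻¹ * (X - C b) ^ l * ∏ c ∈ S.erase b, (C (b - c)⁻¹ * (X - C c)) ^ μ c

namespace hermiteBasisPoly

variable {K : Type*} [Field K] [DecidableEq K] (S : Finset K) (μ : K → ℕ) (b : K) (l : ℕ)

theorem X_sub_C_pow_dvd : (X - C b) ^ l ∣ hermiteBasisPoly S μ b l :=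
  (dvd_mul_left _ _).mul_right _

theorem X_sub_C_pow_dvd_of_mem {c : K} (hc : c ∈ S.erase b) :
    (X - C c) ^ μ c ∣ hermiteBasisPoly S μ b l := by
  have hfactor : (X - C c) ^ μ c ∣ (C (b - c)⁻¹ * (X - C c)) ^ μ c := by
    rw [mul_pow]
    exact dvd_mul_left _ _
  rw [hermiteBasisPoly]
  exact (hfactor.trans
    (Finset.dvd_prod_of_mem (fun c => (C (b - c)⁻¹ * (X - C c)) ^ μ c) hc)).mul_left _

theorem coeff_taylor_self :
    (taylor b (hermiteBasisPoly S μ b l)).coeff l = (l.factorial : K)⁻¹ := by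
  rw [hermiteBasisPoly, mul_comm (C _), mul_assoc, coeff_taylor_X_sub_C_pow_mul, eval_mul,
    eval_C, eval_prod, Finset.prod_eq_one, mul_one]
  intro c hc
  simp [inv_mul_cancel₀ (sub_ne_zero.mpr (Finset.ne_of_mem_erase hc).symm)]

end hermiteBasisPoly

end Polynomial

namespace MvPolynomial

variable {σ R : Type*} [CommSemiring R]

theorem polynomial_aeval_X_eq_sum_monomial (i : σ) (q : Polynomial R) :
    Polynomial.aeval (X i : MvPolynomial σ R) q
      = ∑ d ∈ q.support, monomial (Finsupp.single i d) (q.coeff d) := by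
  conv_lhs => rw [q.as_sum_support]
  simp [X_pow_eq_monomial, C_mul_monomial]

theorem coeff_prod_polynomial_aeval_X [Fintype σ] [DecidableEq σ] (q : σ → Polynomial R)
    (m : σ →₀ ℕ) : coeff m (∏ i, Polynomial.aeval (X i) (q i)) = ∏ i, (q i).coeff (m i) := by
  simp_rw [polynomial_aeval_X_eq_sum_monomial, Finset.prod_univ_sum, ← monomial_sum_prod,
    coeff_sum, coeff_monomial, ← Finsupp.equivFunOnFinite_symm_eq_sum, Equiv.symm_apply_eq,
    Finset.sum_ite_eq']
  split_ifs with hm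
  · rfl
  · obtain ⟨i, hi⟩ : ∃ i, m i ∉ (q i).support := by simpa [Fintype.mem_piFinset] using hm
    exact (Finset.prod_eq_zero (Finset.mem_univ i) (Polynomial.notMem_support_iff.mp hi)).symm

noncomputable def taylorCoeff (a : σ → R) (m : σ →₀ ℕ) : MvPolynomial σ R →ₗ[R] R :=
  lcoeff R m ∘ₗ (aeval fun i => X i + C (a i)).toLinearMap

theorem aeval_X_add_C_polynomial_aeval_X (a : σ → R) (i : σ) (q : Polynomial R) :
    aeval (fun j => X j + C (a j)) (Polynomial.aeval (X i : MvPolynomial σ R) q)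
      = Polynomial.aeval (X i : MvPolynomial σ R) (Polynomial.taylor (a i) q) := by
  rw [← Polynomial.aeval_algHom_apply, aeval_X, Polynomial.taylor_apply, Polynomial.aeval_comp]
  simp

theorem taylorCoeff_prod_polynomial_aeval_X [Fintype σ] [DecidableEq σ] (a : σ → R)
    (m : σ →₀ ℕ) (q : σ → Polynomial R) :
    taylorCoeff a m (∏ i, Polynomial.aeval (X i) (q i))
      = ∏ i, (Polynomial.taylor (a i) (q i)).coeff (m i) := by
  simp only [taylorCoeff, LinearMap.comp_apply, AlgHom.toLinearMap_apply, map_prod,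
    aeval_X_add_C_polynomial_aeval_X, lcoeff_apply, coeff_prod_polynomial_aeval_X]

end MvPolynomial

section HermiteBasis

open Polynomial (taylor hermiteBasisPoly)

variable {K : Type*} [Field K] [DecidableEq K] {n : ℕ} (A : Fin n → Finset K)
  (ν : Fin n → K → ℕ)

theorem hermiteBasis_eq_prod_polynomial_aeval (b : Fin n → K) (l : Fin n → ℕ) :
    hermiteBasis A ν b l
      = ∏ i, Polynomial.aeval (X i) (hermiteBasisPoly (A i) (ν i) (b i) (l i)) := by
  refine Finset.prod_congr rfl fun i _ => ?_
  simp only [hermiteBasisPoly, hermiteFactor, map_mul, map_prod, map_pow, map_sub,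
    Polynomial.aeval_X, Polynomial.aeval_C, algebraMap_eq]

theorem taylorCoeff_hermiteBasis (a b : Fin n → K) (m l : Fin n → ℕ) :
    taylorCoeff a (Finsupp.equivFunOnFinite.symm m) (hermiteBasis A ν b l)
      = ∏ i, (taylor (a i) (hermiteBasisPoly (A i) (ν i) (b i) (l i))).coeff (m i) := by
  rw [hermiteBasis_eq_prod_polynomial_aeval, taylorCoeff_prod_polynomial_aeval_X,
    Finsupp.coe_equivFunOnFinite_symm]

theorem taylorCoeff_hermiteBasis_self (a : Fin n → K) (m : Fin n → ℕ) :
    taylorCoeff a (Finsupp.equivFunOnFinite.symm m) (hermiteBasis A ν a m)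
      = ∏ i, ((m i).factorial : K)⁻¹ := by
  simp only [taylorCoeff_hermiteBasis, hermiteBasisPoly.coeff_taylor_self]

theorem taylorCoeff_hermiteBasis_eq_zero {a b : Fin n → K} {m l : Fin n → ℕ}
    (ha : ∀ i, a i ∈ A i) (hm : ∀ i, m i < ν i (a i)) (hne : (b, l) ≠ (a, m)) (hlm : ¬ l < m) :
    taylorCoeff a (Finsupp.equivFunOnFinite.symm m) (hermiteBasis A ν b l) = 0 := by
  rw [taylorCoeff_hermiteBasis, Finset.prod_eq_zero_iff]
  by_cases hba : b = a
  · subst hba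
    have hlm' : ¬ l ≤ m := fun hle => hlm (hle.lt_of_ne fun h => hne (by rw [h]))
    obtain ⟨i, hi⟩ : ∃ i, m i < l i := by simpa [Pi.le_def] using hlm'
    exact ⟨i, Finset.mem_univ i,
      Polynomial.coeff_taylor_eq_zero_of_dvd (hermiteBasisPoly.X_sub_C_pow_dvd _ _ _ _) hi⟩
  · obtain ⟨i, hi⟩ := Function.ne_iff.mp hba
    have hai : a i ∈ (A i).erase (b i) := Finset.mem_erase.mpr ⟨hi.symm, ha i⟩
    exact ⟨i, Finset.mem_univ i, Polynomial.coeff_taylor_eq_zero_of_dvd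
      (hermiteBasisPoly.X_sub_C_pow_dvd_of_mem _ _ _ _ hai) (hm i)⟩

end HermiteBasis

theorem hermite_basis_linear_independent_general
    {n : ℕ} (A : Fin n → Finset k) (ν : Fin n → k → ℕ) :
    LinearIndependent k
      (fun p : {q : (Fin n → k) × (Fin n → ℕ) //
          (∀ i, q.1 i ∈ A i) ∧ ∀ i, q.2 i < ν i (q.1 i)} =>
        hermiteBasis A ν p.1.1 p.1.2) := by
  refine LinearIndependent.of_dual_triangular (InvImage.wf (fun p => p.1.2) wellFounded_lt)
    (fun p => taylorCoeff p.1.1 (Finsupp.equivFunOnFinite.symm p.1.2)) (fun p => ?_) ?_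
  · rw [taylorCoeff_hermiteBasis_self]
    simp [Finset.prod_eq_zero_iff, Nat.factorial_ne_zero]
  · rintro ⟨⟨a, m⟩, ha, hm⟩ ⟨⟨b, l⟩, _⟩ hne hlm
    exact taylorCoeff_hermiteBasis_eq_zero A ν ha hm (fun h => hne (Subtype.ext h)) hlm

theorem hermite_basis_linear_independent
    {n : ℕ} (A : Fin n → Finset k) (ν : Fin n → k → ℕ)
    (hν : ∀ i, ∀ x ∈ A i, 1 ≤ ν i x) :
    LinearIndependent k
      (fun p : {q : (Fin n → k) × (Fin n → ℕ) //
          (∀ i, q.1 i ∈ A i) ∧ ∀ i, q.2 i < ν i (q.1 i)} =>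
        hermiteBasis A ν p.1.1 p.1.2) :=
  hermite_basis_linear_independent_general A ν
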